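/- For a measure-preserving flow on a finite measure space with an involution R satisfying R∘Φ_t = Φ_{−t}∘R and R mapping fate region F_j to origin region O_j measure-isomorphically, the measure of the set of points with origin i and fate j equals the measure of the set with origin j and fate i. -/
import Mathlib


open MeasureTheory

/-- For a measure-preserving flow with a reversing measure-preserving involution mapping
origin regions onto fate regions, the measure of the origin-i/fate-j set equals that of
the origin-j/fate-i set. -/
theorem reversal_symmetric_ofm_measures {X : Type*} [MeasurableSpace X]
    (μ : Measure X) [IsFiniteMeasure μ]
    (Φ : ℝ → X → X) (hΦ : ∀ t, MeasurePreserving (Φ t) μ μ)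
    (hflow0 : ∀ z, Φ 0 z = z)
    (hflow : ∀ s t z, Φ s (Φ t z) = Φ (s + t) z)
    (R : X → X) (hRmp : MeasurePreserving R μ μ) (hR : Function.Involutive R)
    (hcomm : ∀ t z, Φ t (R z) = R (Φ (-t) z))
    {n : ℕ} (O F : Fin n → Set X)
    (hOdisj : ∀ i j, i ≠ j → Disjoint (O i) (O j))
    (hFdisj : ∀ i j, i ≠ j → Disjoint (F i) (F j))
    (hOmeas : ∀ i, MeasurableSet (O i)) (hFmeas : ∀ i, MeasurableSet (F i))
    (hRO : ∀ i, R '' O i = F i)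
    (A : Fin n → Fin n → Set X)
    (hA : ∀ i j, A i j =
      {z | (∃ t ≤ (0:ℝ), Φ t z ∈ O i) ∧ ∃ s ≥ (0:ℝ), Φ s z ∈ F j})
    (i j : Fin n) :
    μ (A i j) = μ (A j i) := by
  -- R gives a measurable equivalence
  have hRmem : ∀ (S : Set X) (x : X), R x ∈ S ↔ x ∈ R '' S := by
    intro S x
    constructor
    · intro h; exact ⟨R x, h, hR x⟩
    · rintro ⟨y, hy, rfl⟩; rwa [hR y]
  have hRF : ∀ k, R '' F k = O k := by
    intro k
    rw [← hRO k, Set.image_image]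
    simp only [hR _]
    exact Set.image_id _
  have hset : A i j = R ⁻¹' (A j i) := by
    rw [hA i j, hA j i]
    ext z
    simp only [Set.mem_preimage, Set.mem_setOf_eq]
    constructor
    · rintro ⟨⟨t, ht, hto⟩, s, hs, hsf⟩
      constructor
      · refine ⟨-s, by linarith, ?_⟩
        rw [hcomm, neg_neg, hRmem, hRO]
        exact hsf
      · refine ⟨-t, by linarith, ?_⟩
        rw [hcomm, neg_neg, hRmem, hRF]
        exact hto
    · rintro ⟨⟨t, ht, hto⟩, s, hs, hsf⟩
      constructor
      · refine ⟨-s, by linarith, ?_⟩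
        have := hsf
        rw [hcomm, hRmem, hRF] at this
        exact this
      · refine ⟨-t, by linarith, ?_⟩
        have := hto
        rw [hcomm, hRmem, hRO] at this
        exact this
  let e : X ≃ᵐ X :=
    { toFun := R, invFun := R, left_inv := hR, right_inv := hR,
      measurable_toFun := hRmp.measurable, measurable_invFun := hRmp.measurable }
  have hme : MeasurableEmbedding R := e.measurableEmbedding
  rw [hset, hRmp.measure_preimage_emb hme]
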